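/- Let G be a finite simple graph with at least one edge whose edge set carries a linear order, let e be the minimum edge of G, and let k ≥ 1 be a natural number. Then the number of k-element subsets of E(G) that include no broken circuit of G equals the number of k-element subsets of E(G − e) that include no broken circuit of G − e plus the number of (k−1)-element subsets of E(G|_e) that include no broken circuit of G|_e. -/

import Mathlib

attribute [-instance] Sym2.instPartialOrder

open SimpleGraph

/-- `B` is a broken circuit of the simple graph `G` (whose edges are compared via the
linear order on `Sym2 V`): `B` is obtained from the edge set of a cycle of `G` by
removing its maximum edge. -/
def IsBrokenCircuit {V : Type*} [LinearOrder (Sym2 V)] (G : SimpleGraph V)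
    (B : Set (Sym2 V)) : Prop :=
  ∃ (u : V) (w : G.Walk u u), w.IsCycle ∧
    ∃ fm ∈ w.edges, (∀ g ∈ w.edges, g ≤ fm) ∧ B = {g | g ∈ w.edges} \ {fm}

/-- `{e, f, h}` is the edge set of a triangle in `G`. -/
def IsTriangleEdges {V : Type*} (G : SimpleGraph V) (e f h : Sym2 V) : Prop :=
  ∃ x y z : V, G.Adj x y ∧ G.Adj y z ∧ G.Adj z x ∧
    e = s(x, y) ∧ f = s(y, z) ∧ h = s(z, x)

/-- The vertex map contracting the edge `s(a, b)`: it identifies `b` with `a`. -/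
def contractMap {V : Type*} [DecidableEq V] (a b : V) : V → V :=
  fun v => if v = b then a else v

/-- The simple graph obtained from `G` by contracting the edge `s(a, b)`
(identifying `b` with `a`); parallel edges arising from the contraction are merged. -/
def contractGraph {V : Type*} [DecidableEq V] (G : SimpleGraph V) (a b : V) :
    SimpleGraph V where
  Adj x y := x ≠ y ∧ ∃ f ∈ G.edgeSet, f ≠ s(a, b) ∧
    Sym2.map (contractMap a b) f = s(x, y)
  symm := by
    constructor
    rintro x y ⟨hxy, f, hf, hfe, hmap⟩
    exact ⟨hxy.symm, f, hf, hfe, by rw [hmap, Sym2.eq_swap]⟩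
  loopless := by constructor; rintro x ⟨h, -⟩; exact h rfl

/-- `f` belongs to the edge set of `G|ₑ` (for `e = s(a, b)`), viewed as a subset of
the edge set of `G`: `f` is an edge of `G` other than `e` and there is no edge `h > f`
such that `{e, f, h}` is the edge set of a triangle in `G` (i.e. `f` is the maximum
edge in its parallel class after contraction of `e`). -/
def IsContractEdge {V : Type*} [LinearOrder (Sym2 V)] (G : SimpleGraph V)
    (e f : Sym2 V) : Prop :=
  f ∈ G.edgeSet ∧ f ≠ e ∧ ∀ h : Sym2 V, f < h → ¬ IsTriangleEdges G e f h

/-- `B` is a broken circuit of the contraction `G|ₑ` (with `e = s(a, b)`), expressed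
via the identification of the edge set of `G|ₑ` with a subset of the edge set of `G`:
there is a cycle `w` of the contracted simple graph such that, with
`S ⊆ E(G)` the set of representatives of the edges of `w`, `B = S \ {max S}`. -/
def IsContractBrokenCircuit {V : Type*} [DecidableEq V] [LinearOrder (Sym2 V)]
    (G : SimpleGraph V) (a b : V) (B : Set (Sym2 V)) : Prop :=
  ∃ (u : V) (w : (contractGraph G a b).Walk u u), w.IsCycle ∧
    ∃ S : Set (Sym2 V),
      (∀ f, f ∈ S ↔ IsContractEdge G s(a, b) f ∧
        Sym2.map (contractMap a b) f ∈ w.edges) ∧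
      ∃ fm ∈ S, (∀ g ∈ S, g ≤ fm) ∧ B = S \ {fm}

section helpers
variable {V : Type*} [DecidableEq V] {a b : V}

lemma cm_ne_b (hab : a ≠ b) (v : V) : contractMap a b v ≠ b := by
  unfold contractMap; split_ifs with h
  · exact hab
  · exact h

lemma cm_of_ne {v : V} (h : v ≠ b) : contractMap a b v = v := if_neg h

lemma cm_b : contractMap a b b = a := if_pos rfl

lemma cm_eq_cases {u v : V} (h : contractMap a b u = contractMap a b v) :
    u = v ∨ s(u, v) = s(a, b) := by
  unfold contractMap at h
  split_ifs at h with h1 h2 h2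
  · left; rw [h1, h2]
  · right; subst h1; rw [← h, Sym2.eq_swap]
  · right; subst h2; rw [h]
  · left; exact h

lemma cm_eq_a_cases {u : V} (h : contractMap a b u = a) : u = a ∨ u = b := by
  by_cases hu : u = b
  · right; exact hu
  · left; rw [cm_of_ne hu] at h; exact h

lemma cm_eq_target {u c : V} (hc : c ≠ a) (h : contractMap a b u = c) : u = c := by
  by_cases hu : u = b
  · subst hu; rw [cm_b] at h; exact absurd h.symm hc
  · rwa [cm_of_ne hu] at h

lemma parallel_struct_aux (hab : a ≠ b) {f1 f2 : Sym2 V} (h1 : ¬ f1.IsDiag) (hb1 : b ∈ f1)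
    (he1 : f1 ≠ s(a, b)) (hne : f1 ≠ f2)
    (hm : Sym2.map (contractMap a b) f1 = Sym2.map (contractMap a b) f2) :
    ∃ c, c ≠ a ∧ c ≠ b ∧ f1 = s(b, c) ∧ f2 = s(a, c) := by
  set c := Sym2.Mem.other hb1 with hc
  have hf1 : f1 = s(b, c) := (Sym2.other_spec hb1).symm
  have hcb : c ≠ b := by
    intro h; rw [hf1, h] at h1; exact h1 (Sym2.mk_isDiag_iff.2 rfl)
  have hca : c ≠ a := by
    intro h; apply he1; rw [hf1, h, Sym2.eq_swap]
  refine ⟨c, hca, hcb, hf1, ?_⟩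
  rw [hf1, Sym2.map_pair_eq, cm_b, cm_of_ne hcb] at hm
  induction f2 using Sym2.inductionOn with | hf u v =>
  rw [Sym2.map_pair_eq, Sym2.eq_iff] at hm
  rcases hm with ⟨hu, hv⟩ | ⟨hu, hv⟩
  · rcases cm_eq_a_cases hu.symm with h | h
    · rw [h, cm_eq_target hca hv.symm]
    · exfalso; apply hne; rw [hf1, h, cm_eq_target hca hv.symm]
  · rcases cm_eq_a_cases hu.symm with h | h
    · rw [h, cm_eq_target hca hv.symm, Sym2.eq_swap]
    · exfalso; apply hne; rw [hf1, h, cm_eq_target hca hv.symm, Sym2.eq_swap]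

lemma parallel_struct (hab : a ≠ b) {f1 f2 : Sym2 V} (h1 : ¬ f1.IsDiag) (h2 : ¬ f2.IsDiag)
    (he1 : f1 ≠ s(a, b)) (he2 : f2 ≠ s(a, b)) (hne : f1 ≠ f2)
    (hm : Sym2.map (contractMap a b) f1 = Sym2.map (contractMap a b) f2) :
    ∃ c, c ≠ a ∧ c ≠ b ∧ ((f1 = s(a, c) ∧ f2 = s(b, c)) ∨ (f1 = s(b, c) ∧ f2 = s(a, c))) := by
  by_cases hb1 : b ∈ f1
  · obtain ⟨c, hca, hcb, e1, e2⟩ := parallel_struct_aux hab h1 hb1 he1 hne hm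
    exact ⟨c, hca, hcb, Or.inr ⟨e1, e2⟩⟩
  by_cases hb2 : b ∈ f2
  · obtain ⟨c, hca, hcb, e2, e1⟩ := parallel_struct_aux hab h2 hb2 he2 (Ne.symm hne) hm.symm
    exact ⟨c, hca, hcb, Or.inl ⟨e1, e2⟩⟩
  · exfalso; apply hne
    have k1 : Sym2.map (contractMap a b) f1 = f1 := by
      induction f1 using Sym2.inductionOn with | hf u v =>
      rw [Sym2.mem_iff] at hb1; push_neg at hb1
      rw [Sym2.map_pair_eq, cm_of_ne (Ne.symm hb1.1), cm_of_ne (Ne.symm hb1.2)]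
    have k2 : Sym2.map (contractMap a b) f2 = f2 := by
      induction f2 using Sym2.inductionOn with | hf u v =>
      rw [Sym2.mem_iff] at hb2; push_neg at hb2
      rw [Sym2.map_pair_eq, cm_of_ne (Ne.symm hb2.1), cm_of_ne (Ne.symm hb2.2)]
    rw [← k1, ← k2, hm]
end helpers

section graphhelpers
variable {V : Type*} [Fintype V] [DecidableEq V] [LinearOrder (Sym2 V)]
  {G : SimpleGraph V} {a b : V}

/-- a triangle partner has the same contraction image and is itself a non-`e` edge -/
lemma triangle_partner {f h : Sym2 V} (ht : IsTriangleEdges G s(a, b) f h) :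
    h ∈ G.edgeSet ∧ h ≠ s(a, b) ∧
      Sym2.map (contractMap a b) h = Sym2.map (contractMap a b) f := by
  obtain ⟨x, y, z, hxy, hyz, hzx, hexy, hfyz, hhzx⟩ := ht
  have hab : a ≠ b := by
    intro h; subst h
    rcases Sym2.eq_iff.1 hexy with ⟨h1, h2⟩ | ⟨h1, h2⟩ <;>
      exact hxy.ne (by rw [← h1, ← h2])
  have hcm : contractMap a b x = contractMap a b y := by
    rcases Sym2.eq_iff.1 hexy with ⟨h1, h2⟩ | ⟨h1, h2⟩
    · rw [← h1, ← h2, cm_b, cm_of_ne hab]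
    · rw [← h1, ← h2, cm_b, cm_of_ne hab]
  refine ⟨by rw [hhzx]; exact (G.mem_edgeSet).2 hzx, ?_, ?_⟩
  · intro hco
    have hco2 : s(z, x) = s(x, y) := by rw [← hhzx, hco, hexy]
    rcases Sym2.eq_iff.1 hco2 with ⟨h1, h2⟩ | ⟨h1, h2⟩
    · exact hzx.ne h1
    · exact hyz.ne h1.symm
  · rw [hfyz, hhzx, Sym2.map_pair_eq, Sym2.map_pair_eq, hcm, Sym2.eq_swap]

end graphhelpers

section graphhelpers2
variable {V : Type*} [Fintype V] [DecidableEq V] [LinearOrder (Sym2 V)]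
  {G : SimpleGraph V} {a b : V}

lemma maxRep (he : s(a, b) ∈ G.edgeSet) {g : Sym2 V}
    (hg : ∃ f ∈ G.edgeSet, f ≠ s(a, b) ∧ Sym2.map (contractMap a b) f = g) :
    ∃ f, IsContractEdge G s(a, b) f ∧ Sym2.map (contractMap a b) f = g ∧
      ∀ f', f' ∈ G.edgeSet → f' ≠ s(a, b) → Sym2.map (contractMap a b) f' = g → f' ≤ f := by
  classical
  set R : Set (Sym2 V) :=
    {f | f ∈ G.edgeSet ∧ f ≠ s(a, b) ∧ Sym2.map (contractMap a b) f = g} with hR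
  have hfin : R.Finite := Set.toFinite R
  obtain ⟨f0, hf0⟩ := hg
  have hne : R.Nonempty := ⟨f0, hf0.1, hf0.2.1, hf0.2.2⟩
  obtain ⟨f, hfR, hfmax⟩ := Set.Finite.exists_maximalFor id R hfin hne
  have hmax : ∀ f', f' ∈ G.edgeSet → f' ≠ s(a, b) →
      Sym2.map (contractMap a b) f' = g → f' ≤ f := by
    intro f' h1 h2 h3
    rcases le_total f' f with h | h
    · exact h
    · exact hfmax ⟨h1, h2, h3⟩ h
  refine ⟨f, ⟨hfR.1, hfR.2.1, ?_⟩, hfR.2.2, hmax⟩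
  intro h hlt ht
  obtain ⟨hE, hne', hmap⟩ := triangle_partner ht
  exact absurd (hmax h hE hne' (hmap.trans hfR.2.2)) (not_le.2 hlt)

lemma triangle_of_parallel (he : s(a, b) ∈ G.edgeSet) {f1 f2 : Sym2 V}
    (h1 : f1 ∈ G.edgeSet) (h2 : f2 ∈ G.edgeSet) (he1 : f1 ≠ s(a, b)) (he2 : f2 ≠ s(a, b))
    (hne : f1 ≠ f2)
    (hm : Sym2.map (contractMap a b) f1 = Sym2.map (contractMap a b) f2) :
    IsTriangleEdges G s(a, b) f1 f2 := by
  have hab : a ≠ b := by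
    intro h; exact G.not_isDiag_of_mem_edgeSet he (by rw [h]; exact Sym2.mk_isDiag_iff.2 rfl)
  obtain ⟨c, hca, hcb, hcase⟩ := parallel_struct hab (G.not_isDiag_of_mem_edgeSet h1)
    (G.not_isDiag_of_mem_edgeSet h2) he1 he2 hne hm
  rcases hcase with ⟨e1, e2⟩ | ⟨e1, e2⟩
  · refine ⟨b, a, c, (G.mem_edgeSet.1 he).symm, ?_, ?_, Sym2.eq_swap.symm, e1, ?_⟩
    · rw [e1] at h1; exact G.mem_edgeSet.1 h1
    · rw [e2] at h2; exact (G.mem_edgeSet.1 h2).symm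
    · rw [e2, Sym2.eq_swap]
  · refine ⟨a, b, c, G.mem_edgeSet.1 he, ?_, ?_, rfl, e1, ?_⟩
    · rw [e1] at h1; exact G.mem_edgeSet.1 h1
    · rw [e2] at h2; exact (G.mem_edgeSet.1 h2).symm
    · rw [e2, Sym2.eq_swap]

lemma rep_unique (he : s(a, b) ∈ G.edgeSet) {f1 f2 : Sym2 V}
    (h1 : IsContractEdge G s(a, b) f1) (h2 : IsContractEdge G s(a, b) f2)
    (hm : Sym2.map (contractMap a b) f1 = Sym2.map (contractMap a b) f2) : f1 = f2 := by
  by_contra hne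
  rcases lt_or_gt_of_ne hne with h | h
  · exact h1.2.2 f2 h (triangle_of_parallel he h1.1 h2.1 h1.2.1 h2.2.1 hne hm)
  · exact h2.2.2 f1 h (triangle_of_parallel he h2.1 h1.1 h2.2.1 h1.2.1 (Ne.symm hne) hm.symm)

lemma contract_adj_ne_b (hab : a ≠ b) {x y : V} (h : (contractGraph G a b).Adj x y) :
    x ≠ b ∧ y ≠ b := by
  obtain ⟨-, f, -, -, hmap⟩ := h
  constructor
  · have hx : x ∈ Sym2.map (contractMap a b) f := by rw [hmap]; exact Sym2.mem_mk_left x y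
    obtain ⟨w, -, hw⟩ := Sym2.mem_map.1 hx
    rw [← hw]; exact cm_ne_b hab w
  · have hy : y ∈ Sym2.map (contractMap a b) f := by rw [hmap]; exact Sym2.mem_mk_right x y
    obtain ⟨w, -, hw⟩ := Sym2.mem_map.1 hy
    rw [← hw]; exact cm_ne_b hab w

lemma map_mem_contract_edgeSet {f : Sym2 V} (hf : f ∈ G.edgeSet) (hfe : f ≠ s(a, b)) :
    Sym2.map (contractMap a b) f ∈ (contractGraph G a b).edgeSet := by
  induction f using Sym2.inductionOn with | hf u v =>
  rw [Sym2.map_pair_eq, SimpleGraph.mem_edgeSet]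
  refine ⟨?_, s(u, v), hf, hfe, Sym2.map_pair_eq _ _ _⟩
  intro hcc
  rcases cm_eq_cases hcc with h | h
  · exact (G.mem_edgeSet.1 hf).ne h
  · exact hfe h

lemma edge_decomp {f : Sym2 V} {x z : V} (hf : f ∈ G.edgeSet)
    (hm : Sym2.map (contractMap a b) f = s(x, z)) :
    ∃ u v, G.Adj u v ∧ f = s(u, v) ∧ contractMap a b u = x ∧ contractMap a b v = z := by
  induction f using Sym2.inductionOn with | hf u v =>
  rw [Sym2.map_pair_eq, Sym2.eq_iff] at hm
  rcases hm with ⟨hu, hv⟩ | ⟨hu, hv⟩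
  · exact ⟨u, v, G.mem_edgeSet.1 hf, rfl, hu, hv⟩
  · exact ⟨v, u, (G.mem_edgeSet.1 hf).symm, Sym2.eq_swap.symm, hv, hu⟩

lemma projWalk (he : s(a, b) ∈ G.edgeSet) {x y : V} (p : G.Walk x y) :
    ∃ q : (contractGraph G a b).Walk (contractMap a b x) (contractMap a b y),
      ∀ g ∈ q.edges, ∃ f ∈ p.edges, f ≠ s(a, b) ∧ Sym2.map (contractMap a b) f = g := by
  induction p with
  | nil => exact ⟨.nil, by simp⟩
  | @cons x z y h p ih =>
    obtain ⟨q, hq⟩ := ih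
    by_cases hez : s(x, z) = s(a, b)
    · have hcc : contractMap a b x = contractMap a b z := by
        rcases Sym2.eq_iff.1 hez with ⟨h1, h2⟩ | ⟨h1, h2⟩
        · rw [h1, h2, cm_b, cm_of_ne (fun hc : a = b => h.ne (h1.trans (hc.trans h2.symm)))]
        · rw [h1, h2, cm_b, cm_of_ne (fun hc : a = b => h.ne (h1.trans (hc.symm.trans h2.symm)))]
      refine ⟨q.copy hcc.symm rfl, ?_⟩
      intro g hg
      rw [Walk.edges_copy] at hg
      obtain ⟨f, hf1, hf2, hf3⟩ := hq g hg
      exact ⟨f, by simp [hf1], hf2, hf3⟩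
    · have hadj : (contractGraph G a b).Adj (contractMap a b x) (contractMap a b z) := by
        refine ⟨?_, s(x, z), G.mem_edgeSet.2 h, hez, Sym2.map_pair_eq _ _ _⟩
        intro hcc
        rcases cm_eq_cases hcc with h' | h'
        · exact h.ne h'
        · exact hez h'
      refine ⟨Walk.cons hadj q, ?_⟩
      intro g hg
      rw [Walk.edges_cons, List.mem_cons] at hg
      rcases hg with hg | hg
      · exact ⟨s(x, z), by simp, hez, by rw [hg]; exact Sym2.map_pair_eq _ _ _⟩
      · obtain ⟨f, hf1, hf2, hf3⟩ := hq g hg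
        exact ⟨f, by simp [hf1], hf2, hf3⟩

lemma liftWalk (he : s(a, b) ∈ G.edgeSet) {x y : V} (p : (contractGraph G a b).Walk x y) :
    y ≠ b →
    ∃ (x' y' : V) (q : G.Walk x' y'), contractMap a b x' = x ∧ contractMap a b y' = y ∧
      ∀ f ∈ q.edges, f = s(a, b) ∨ (IsContractEdge G s(a, b) f ∧
        Sym2.map (contractMap a b) f ∈ p.edges) := by
  induction p with
  | nil => intro hy; exact ⟨_, _, .nil, cm_of_ne hy, cm_of_ne hy, by simp⟩
  | @cons x z y h p ih =>
    intro hy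
    obtain ⟨z', y', q, hz', hy', hq⟩ := ih hy
    obtain ⟨f, hfc, hfm, -⟩ := maxRep he h.2
    obtain ⟨u, v, huv, hfuv, hcu, hcv⟩ := edge_decomp hfc.1 hfm
    have hvz : contractMap a b v = contractMap a b z' := by rw [hcv, hz']
    have key : ∃ q2 : G.Walk v y', ∀ g ∈ q2.edges, g = s(a, b) ∨ g ∈ q.edges := by
      rcases cm_eq_cases hvz with h' | h'
      · exact ⟨q.copy h'.symm rfl, by intro g hg; rw [Walk.edges_copy] at hg; exact Or.inr hg⟩
      · refine ⟨Walk.cons (G.mem_edgeSet.1 (by rw [h']; exact he)) q, ?_⟩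
        intro g hg
        rw [Walk.edges_cons, List.mem_cons] at hg
        rcases hg with hg | hg
        · exact Or.inl (hg.trans h')
        · exact Or.inr hg
    obtain ⟨q2, hq2⟩ := key
    refine ⟨u, y', Walk.cons huv q2, hcu, hy', ?_⟩
    intro g hg
    rw [Walk.edges_cons, List.mem_cons] at hg
    rcases hg with hg | hg
    · right; rw [hg, ← hfuv]; exact ⟨hfc, by rw [hfm]; simp⟩
    · rcases hq2 g hg with h' | h'
      · exact Or.inl h'
      · rcases hq g h' with h'' | ⟨hc, hm⟩
        · exact Or.inl h''
        · exact Or.inr ⟨hc, by rw [Walk.edges_cons]; exact List.mem_cons_of_mem _ hm⟩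

end graphhelpers2

section bigs
variable {V : Type*} [Fintype V] [DecidableEq V] [LinearOrder (Sym2 V)]
  {G : SimpleGraph V} {a b : V}

lemma connectorWalk (he : s(a, b) ∈ G.edgeSet) {p q : V}
    (h : contractMap a b p = contractMap a b q) :
    ∃ w : G.Walk p q, ∀ g ∈ w.edges, g = s(a, b) := by
  rcases cm_eq_cases h with h' | h'
  · exact ⟨h' ▸ Walk.nil, by subst h'; simp⟩
  · refine ⟨Walk.cons (G.mem_edgeSet.1 (by rw [h']; exact he)) Walk.nil, ?_⟩
    intro g hg
    simp only [Walk.edges_cons, Walk.edges_nil, List.mem_singleton] at hg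
    rw [hg, h']

lemma cycle_two_edges {W : Type*} {H : SimpleGraph W} {u : W} {w : H.Walk u u}
    (hw : w.IsCycle) : ∃ g1 ∈ w.edges, ∃ g2 ∈ w.edges, g1 ≠ g2 := by
  have h3 := hw.three_le_length
  have hlen : 2 ≤ w.edges.length := by rw [w.length_edges]; omega
  have hnd := hw.isTrail.edges_nodup
  match hh : w.edges, hlen, hnd with
  | g1 :: g2 :: rest, _, hnd =>
    refine ⟨g1, by first | exact List.mem_cons_self | (rw [hh]; exact List.mem_cons_self), g2, by first | exact List.mem_cons_of_mem _ (List.mem_cons_self) | (rw [hh]; exact List.mem_cons_of_mem _ (List.mem_cons_self)), ?_⟩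
    rw [List.nodup_cons] at hnd
    intro hc; exact hnd.1 (by rw [hc]; simp)

lemma cycle_edges_nonempty {W : Type*} {H : SimpleGraph W} {u : W} {w : H.Walk u u}
    (hw : w.IsCycle) : ∃ g, g ∈ w.edges := by
  obtain ⟨g1, h1, -⟩ := cycle_two_edges hw
  exact ⟨g1, h1⟩

lemma max_ne_min_edge (he : s(a, b) ∈ G.edgeSet) (hmin : ∀ f ∈ G.edgeSet, s(a, b) ≤ f)
    {u : V} {w : G.Walk u u} (hw : w.IsCycle) {fm : Sym2 V}
    (hmax : ∀ g ∈ w.edges, g ≤ fm) : fm ≠ s(a, b) := by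
  intro hco
  obtain ⟨g1, h1, g2, h2, hne⟩ := cycle_two_edges hw
  have e1 : g1 = s(a, b) :=
    le_antisymm (hco ▸ hmax g1 h1) (hmin g1 (w.edges_subset_edgeSet h1))
  have e2 : g2 = s(a, b) :=
    le_antisymm (hco ▸ hmax g2 h2) (hmin g2 (w.edges_subset_edgeSet h2))
  exact hne (e1.trans e2.symm)

lemma lift_cycle (he : s(a, b) ∈ G.edgeSet) {u : V}
    (w : (contractGraph G a b).Walk u u) (hw : w.IsCycle) (S : Set (Sym2 V))
    (hS : ∀ f, f ∈ S ↔ IsContractEdge G s(a, b) f ∧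
      Sym2.map (contractMap a b) f ∈ w.edges) :
    ∃ (u' : V) (c : G.Walk u' u'), c.IsCycle ∧ ∀ f ∈ c.edges, f ∈ S ∨ f = s(a, b) := by
  classical
  have hab : a ≠ b := fun h =>
    G.not_isDiag_of_mem_edgeSet he (by rw [h]; exact Sym2.mk_isDiag_iff.2 rfl)
  obtain ⟨g0, hg0⟩ := cycle_edges_nonempty hw
  revert hg0
  induction g0 using Sym2.inductionOn with | hf x0 y0 =>
  intro hg0
  have hadj0 : (contractGraph G a b).Adj x0 y0 := w.adj_of_mem_edges hg0
  obtain ⟨f0, hf0c, hf0m, -⟩ := maxRep he hadj0.2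
  have hf0S : f0 ∈ S := (hS f0).2 ⟨hf0c, by rw [hf0m]; exact hg0⟩
  -- transfer the cycle into the edge subgraph and get reachability avoiding g0
  set KW : SimpleGraph V := fromEdgeSet {g | g ∈ w.edges} with hKW
  have hsub : ∀ g ∈ w.edges, g ∈ KW.edgeSet := by
    intro g hg
    rw [hKW, edgeSet_fromEdgeSet]
    exact ⟨hg, (contractGraph G a b).not_isDiag_of_mem_edgeSet (w.edges_subset_edgeSet hg)⟩
  have hpair := (SimpleGraph.adj_and_reachable_delete_edges_iff_exists_cycle (G := KW)).2
    ⟨u, w.transfer KW hsub, hw.transfer hsub, by rw [Walk.edges_transfer]; exact hg0⟩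
  obtain ⟨r0⟩ := hpair.2
  have hr0 : ∀ g ∈ r0.edges, g ∈ w.edges ∧ g ≠ s(x0, y0) := by
    intro g hg
    have hmem := r0.edges_subset_edgeSet hg
    rw [edgeSet_deleteEdges, Set.mem_diff, hKW, edgeSet_fromEdgeSet] at hmem
    refine ⟨hmem.1.1, fun hc => hmem.2 ?_⟩
    exact hc
  -- view this walk in the contracted graph and lift it to G
  set r : (contractGraph G a b).Walk x0 y0 :=
    r0.transfer (contractGraph G a b)
      (fun g hg => w.edges_subset_edgeSet (hr0 g hg).1) with hrdef
  have hredges : ∀ g ∈ r.edges, g ∈ w.edges ∧ g ≠ s(x0, y0) := by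
    intro g hg; rw [hrdef, Walk.edges_transfer] at hg; exact hr0 g hg
  obtain ⟨x', y', q, hx', hy', hq⟩ := liftWalk he r (contract_adj_ne_b hab hadj0).2
  obtain ⟨u0, v0, hu0v0, hfuv, hcu, hcv⟩ := edge_decomp hf0c.1 hf0m
  -- connectors
  obtain ⟨w1, hw1⟩ := connectorWalk he (show contractMap a b v0 = contractMap a b y'
    from by rw [hcv, hy'])
  obtain ⟨w2, hw2⟩ := connectorWalk he (show contractMap a b x' = contractMap a b u0
    from by rw [hx', hcu])
  set W : G.Walk v0 u0 := (w1.append q.reverse).append w2 with hW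
  have hWedges : ∀ g ∈ W.edges, (g ∈ S ∪ {s(a, b)}) ∧ g ≠ f0 := by
    intro g hg
    rw [hW, Walk.edges_append, Walk.edges_append, List.mem_append, List.mem_append] at hg
    have hf0e : f0 ≠ s(a, b) := hf0c.2.1
    rcases hg with (hg | hg) | hg
    · have := hw1 g hg
      exact ⟨Or.inr this, fun hc => hf0e (hc ▸ this)⟩
    · rw [Walk.edges_reverse, List.mem_reverse] at hg
      rcases hq g hg with h' | ⟨hc, hm⟩
      · exact ⟨Or.inr h', fun hcc => hf0e (hcc ▸ h')⟩
      · have hmw := hredges _ hm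
        refine ⟨Or.inl ((hS g).2 ⟨hc, hmw.1⟩), fun hcc => hmw.2 ?_⟩
        rw [hcc, hf0m]
    · have := hw2 g hg
      exact ⟨Or.inr this, fun hc => hf0e (hc ▸ this)⟩
  -- now use the bridge lemma inside fromEdgeSet (S ∪ {e})
  set H : SimpleGraph V := fromEdgeSet (S ∪ {s(a, b)}) with hH
  have hSE : ∀ g ∈ S ∪ {s(a, b)}, g ∈ G.edgeSet := by
    intro g hg
    rcases hg with hg | hg
    · exact ((hS g).1 hg).1.1
    · rw [hg]; exact he
  have hWsub : ∀ g ∈ W.edges, g ∈ (H \ fromEdgeSet {f0}).edgeSet := by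
    intro g hg
    obtain ⟨hg1, hg2⟩ := hWedges g hg
    rw [edgeSet_sdiff, Set.mem_diff, hH, edgeSet_fromEdgeSet]
    have hnd : ¬ g.IsDiag := G.not_isDiag_of_mem_edgeSet (W.edges_subset_edgeSet hg)
    refine ⟨⟨hg1, hnd⟩, fun hc => ?_⟩
    rw [edgeSet_fromEdgeSet, Set.mem_diff, Set.mem_singleton_iff] at hc
    exact hg2 hc.1
  have hHadj : H.Adj u0 v0 := by
    rw [hH, fromEdgeSet_adj]
    exact ⟨by rw [← hfuv]; exact Or.inl hf0S, hu0v0.ne⟩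
  have hreach : (H \ fromEdgeSet {s(u0, v0)}).Reachable u0 v0 := by
    rw [← hfuv]
    exact ((W.transfer _ hWsub).reachable).symm
  obtain ⟨u', c, hc, -⟩ :=
    (SimpleGraph.adj_and_reachable_delete_edges_iff_exists_cycle (G := H)).1 ⟨hHadj, hreach⟩
  have hcsub : ∀ g ∈ c.edges, g ∈ G.edgeSet := by
    intro g hg
    have := c.edges_subset_edgeSet hg
    rw [hH, edgeSet_fromEdgeSet] at this
    exact hSE g this.1
  refine ⟨u', c.transfer G hcsub, hc.transfer hcsub, ?_⟩
  intro f hf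
  rw [Walk.edges_transfer] at hf
  have := c.edges_subset_edgeSet hf
  rw [hH, edgeSet_fromEdgeSet] at this
  rcases this.1 with h' | h'
  · exact Or.inl h'
  · exact Or.inr h'

end bigs

section bigs2
variable {V : Type*} [Fintype V] [DecidableEq V] [LinearOrder (Sym2 V)]
  {G : SimpleGraph V} {a b : V}

lemma project_cycle (he : s(a, b) ∈ G.edgeSet) (hmin : ∀ f ∈ G.edgeSet, s(a, b) ≤ f)
    {u : V} {w : G.Walk u u} (hw : w.IsCycle) {fm : Sym2 V} (hfm : fm ∈ w.edges)
    (hmax : ∀ g ∈ w.edges, g ≤ fm) (Y : Set (Sym2 V))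
    (hY : ∀ f ∈ Y, IsContractEdge G s(a, b) f)
    (hB : ∀ g ∈ w.edges, g ≠ fm → g = s(a, b) ∨ g ∈ Y) :
    ∃ B', IsContractBrokenCircuit G a b B' ∧ B' ⊆ Y := by
  classical
  have hab : a ≠ b := fun h =>
    G.not_isDiag_of_mem_edgeSet he (by rw [h]; exact Sym2.mk_isDiag_iff.2 rfl)
  have hfme : fm ≠ s(a, b) := max_ne_min_edge he hmin hw hmax
  -- injectivity of the contraction on the non-e edges of w
  have inj : ∀ f1 ∈ w.edges, ∀ f2 ∈ w.edges, f1 ≠ s(a, b) → f2 ≠ s(a, b) →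
      Sym2.map (contractMap a b) f1 = Sym2.map (contractMap a b) f2 → f1 = f2 := by
    intro f1 h1 f2 h2 he1 he2 hm
    by_contra hne
    have hE1 := w.edges_subset_edgeSet h1
    have hE2 := w.edges_subset_edgeSet h2
    have key : ∀ g1 ∈ w.edges, ∀ g2 ∈ w.edges, g1 ≠ s(a, b) → g2 ≠ s(a, b) →
        g1 ∈ G.edgeSet → g2 ∈ G.edgeSet → g1 < g2 →
        Sym2.map (contractMap a b) g1 = Sym2.map (contractMap a b) g2 → False := by
      intro g1 hg1 g2 hg2 hge1 hge2 hgE1 hgE2 hlt hgm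
      have hg1fm : g1 ≠ fm := fun hc => absurd (hc ▸ hmax g2 hg2) (not_le.2 (hc ▸ hlt))
      rcases hB g1 hg1 hg1fm with h' | h'
      · exact hge1 h'
      · exact (hY g1 h').2.2 g2 hlt
          (triangle_of_parallel he hgE1 hgE2 hge1 hge2 (ne_of_lt hlt) hgm)
    rcases lt_or_gt_of_ne hne with h | h
    · exact key f1 h1 f2 h2 he1 he2 hE1 hE2 h hm
    · exact key f2 h2 f1 h1 he2 he1 hE2 hE1 h hm.symm
  -- pick an edge f0 ≠ e of w
  obtain ⟨g1, hg1, g2, hg2, h12⟩ := cycle_two_edges hw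
  have hf0 : ∃ f0 ∈ w.edges, f0 ≠ s(a, b) := by
    by_cases hc : g1 = s(a, b)
    · exact ⟨g2, hg2, fun hcc => h12 (hc.trans hcc.symm)⟩
    · exact ⟨g1, hg1, hc⟩
  obtain ⟨f0, hf0w, hf0e⟩ := hf0
  revert hf0w hf0e
  induction f0 using Sym2.inductionOn with | hf u0 v0 =>
  intro hf0w hf0e
  have hadj0 : G.Adj u0 v0 := w.adj_of_mem_edges hf0w
  -- bridge lemma in the subgraph on the edges of w
  set KW : SimpleGraph V := fromEdgeSet {g | g ∈ w.edges} with hKW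
  have hsub : ∀ g ∈ w.edges, g ∈ KW.edgeSet := by
    intro g hg
    rw [hKW, edgeSet_fromEdgeSet]
    exact ⟨hg, G.not_isDiag_of_mem_edgeSet (w.edges_subset_edgeSet hg)⟩
  have hpair := (SimpleGraph.adj_and_reachable_delete_edges_iff_exists_cycle (G := KW)).2
    ⟨u, w.transfer KW hsub, hw.transfer hsub, by rw [Walk.edges_transfer]; exact hf0w⟩
  obtain ⟨r0⟩ := hpair.2
  have hr0 : ∀ g ∈ r0.edges, g ∈ w.edges ∧ g ≠ s(u0, v0) := by
    intro g hg
    have hmem := r0.edges_subset_edgeSet hg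
    rw [edgeSet_deleteEdges, Set.mem_diff, hKW, edgeSet_fromEdgeSet] at hmem
    refine ⟨hmem.1.1, fun hc => hmem.2 ?_⟩
    exact hc
  set r : G.Walk u0 v0 :=
    r0.transfer G (fun g hg => w.edges_subset_edgeSet (hr0 g hg).1) with hrdef
  have hredges : ∀ g ∈ r.edges, g ∈ w.edges ∧ g ≠ s(u0, v0) := by
    intro g hg; rw [hrdef, Walk.edges_transfer] at hg; exact hr0 g hg
  obtain ⟨q, hq⟩ := projWalk (G := G) he r
  -- the image edge set
  set T : Set (Sym2 V) :=
    {g | ∃ f ∈ w.edges, f ≠ s(a, b) ∧ Sym2.map (contractMap a b) f = g} with hT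
  have hTsub : ∀ g ∈ T, g ∈ (contractGraph G a b).edgeSet := by
    rintro g ⟨f, hfw, hfe, hfmap⟩
    rw [← hfmap]
    exact map_mem_contract_edgeSet (w.edges_subset_edgeSet hfw) hfe
  set KT : SimpleGraph V := fromEdgeSet T with hKT
  set g0 : Sym2 V := Sym2.map (contractMap a b) s(u0, v0) with hg0def
  have hg0T : g0 ∈ T := ⟨s(u0, v0), hf0w, hf0e, rfl⟩
  have hcm0 : contractMap a b u0 ≠ contractMap a b v0 := by
    intro hc
    rcases cm_eq_cases hc with h' | h'
    · exact hadj0.ne h'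
    · exact hf0e h'
  have hKTadj : KT.Adj (contractMap a b u0) (contractMap a b v0) := by
    rw [hKT, fromEdgeSet_adj]
    exact ⟨by rw [← Sym2.map_pair_eq]; exact hg0T, hcm0⟩
  have hqsub : ∀ g ∈ q.edges,
      g ∈ (KT \ fromEdgeSet {s(contractMap a b u0, contractMap a b v0)}).edgeSet := by
    intro g hg
    obtain ⟨f, hfr, hfe, hfmap⟩ := hq g hg
    have hfw := hredges f hfr
    rw [edgeSet_sdiff, Set.mem_diff, hKT, edgeSet_fromEdgeSet]
    have hnd : ¬ g.IsDiag := (contractGraph G a b).not_isDiag_of_mem_edgeSet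
      (q.edges_subset_edgeSet hg)
    refine ⟨⟨⟨f, hfw.1, hfe, hfmap⟩, hnd⟩, fun hc => ?_⟩
    rw [edgeSet_fromEdgeSet, Set.mem_diff, Set.mem_singleton_iff] at hc
    apply hfw.2
    exact inj f hfw.1 s(u0, v0) hf0w hfe hf0e (by rw [hfmap, hc.1, Sym2.map_pair_eq])
  obtain ⟨u', c, hcyc, -⟩ :=
    (SimpleGraph.adj_and_reachable_delete_edges_iff_exists_cycle (G := KT)).1
      ⟨hKTadj, ⟨q.transfer _ hqsub⟩⟩
  have hcsub : ∀ g ∈ c.edges, g ∈ (contractGraph G a b).edgeSet := by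
    intro g hg
    have := c.edges_subset_edgeSet hg
    rw [hKT, edgeSet_fromEdgeSet] at this
    exact hTsub g this.1
  set cc : (contractGraph G a b).Walk u' u' := c.transfer _ hcsub with hccdef
  have hccT : ∀ g ∈ cc.edges, g ∈ T := by
    intro g hg
    rw [hccdef, Walk.edges_transfer] at hg
    have := c.edges_subset_edgeSet hg
    rw [hKT, edgeSet_fromEdgeSet] at this
    exact this.1
  -- representative set
  set S : Set (Sym2 V) := {f | IsContractEdge G s(a, b) f ∧
    Sym2.map (contractMap a b) f ∈ cc.edges} with hSdef
  obtain ⟨f', hf'c, hf'm, hf'max⟩ := maxRep (G := G) he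
    ⟨fm, w.edges_subset_edgeSet hfm, hfme, rfl⟩
  have hfmf' : fm ≤ f' := hf'max fm (w.edges_subset_edgeSet hfm) hfme rfl
  have SsubY : ∀ f ∈ S, (f ∈ Y ∧ f ∈ w.edges) ∨ f = f' := by
    rintro f ⟨hfc, hfcc⟩
    obtain ⟨f1, hf1w, hf1e, hf1m⟩ := hccT _ hfcc
    by_cases hf1fm : f1 = fm
    · right
      exact rep_unique he hfc hf'c (by rw [← hf1m, hf1fm, hf'm])
    · rcases hB f1 hf1w hf1fm with h' | h'
      · exact absurd h' hf1e
      · left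
        have : f = f1 := rep_unique he hfc (hY f1 h') hf1m.symm
        exact ⟨this ▸ h', this ▸ hf1w⟩
  have hSne : ∃ f, f ∈ S := by
    obtain ⟨g, hg⟩ := cycle_edges_nonempty hcyc
    have hgcc : g ∈ cc.edges := by rw [hccdef, Walk.edges_transfer]; exact hg
    obtain ⟨f1, hf1w, hf1e, hf1m⟩ := hccT _ hgcc
    obtain ⟨fr, hfrc, hfrm, -⟩ := maxRep (G := G) he
      ⟨f1, w.edges_subset_edgeSet hf1w, hf1e, rfl⟩
    exact ⟨fr, hfrc, by rw [hfrm, hf1m]; exact hgcc⟩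
  by_cases hf'S : f' ∈ S
  · refine ⟨S \ {f'}, ⟨u', cc, hcyc.transfer hcsub, S, fun f => Iff.rfl, f', hf'S, ?_, rfl⟩, ?_⟩
    · intro g hg
      rcases SsubY g hg with ⟨-, hgw⟩ | h'
      · exact le_trans (hmax g hgw) hfmf'
      · exact le_of_eq h'
    · rintro f ⟨hfS, hff'⟩
      rcases SsubY f hfS with ⟨h', -⟩ | h'
      · exact h'
      · exact absurd h' hff'
  · have hfin : S.Finite := Set.toFinite S
    obtain ⟨f1, hf1⟩ := hSne
    obtain ⟨fmax, hfmaxS, hfmaxmax⟩ := Set.Finite.exists_maximalFor id S hfin ⟨f1, hf1⟩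
    have hmaxS : ∀ g ∈ S, g ≤ fmax := by
      intro g hg
      rcases le_total g fmax with h' | h'
      · exact h'
      · exact hfmaxmax hg h'
    refine ⟨S \ {fmax}, ⟨u', cc, hcyc.transfer hcsub, S, fun f => Iff.rfl, fmax, hfmaxS, hmaxS, rfl⟩, ?_⟩
    rintro f ⟨hfS, -⟩
    rcases SsubY f hfS with ⟨h', -⟩ | h'
    · exact h'
    · exact absurd (h' ▸ hfS) hf'S

end bigs2

section medium
variable {V : Type*} [Fintype V] [DecidableEq V] [LinearOrder (Sym2 V)]
  {G : SimpleGraph V} {a b : V}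

lemma list_exists_max {α : Type*} [LinearOrder α] {l : List α} (h : ∃ x, x ∈ l) :
    ∃ m ∈ l, ∀ g ∈ l, g ≤ m := by
  induction l with
  | nil => obtain ⟨x, hx⟩ := h; cases hx
  | cons a l ih =>
    by_cases hl : ∃ x, x ∈ l
    · obtain ⟨m, hm, hmax⟩ := ih hl
      rcases le_total a m with h' | h'
      · refine ⟨m, List.mem_cons_of_mem _ hm, ?_⟩
        intro g hg
        rcases List.mem_cons.1 hg with rfl | hg
        · exact h'
        · exact hmax g hg
      · refine ⟨a, List.mem_cons_self, ?_⟩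
        intro g hg
        rcases List.mem_cons.1 hg with rfl | hg
        · exact le_rfl
        · exact (hmax g hg).trans h'
    · have hnil : l = [] := List.eq_nil_iff_forall_not_mem.2 (fun x hx => hl ⟨x, hx⟩)
      subst hnil
      refine ⟨a, List.mem_cons_self, ?_⟩
      intro g hg
      rcases List.mem_cons.1 hg with rfl | hg
      · exact le_rfl
      · exact absurd hg (List.not_mem_nil)

lemma bc_of_triangle (hmin : ∀ f ∈ G.edgeSet, s(a, b) ≤ f) {f h : Sym2 V}
    (hlt : f < h) (hfe : f ≠ s(a, b)) (ht : IsTriangleEdges G s(a, b) f h) :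
    ∃ B, IsBrokenCircuit G B ∧ B ⊆ {s(a, b), f} := by
  obtain ⟨x, y, z, hxy, hyz, hzx, hexy, hfyz, hhzx⟩ := ht
  have hfE : f ∈ G.edgeSet := by rw [hfyz]; exact G.mem_edgeSet.2 hyz
  have hE : s(a, b) ∈ G.edgeSet := by rw [hexy]; exact G.mem_edgeSet.2 hxy
  have hef : s(a, b) < f := lt_of_le_of_ne (hmin f hfE) (Ne.symm hfe)
  have heh : s(a, b) < h := hef.trans hlt
  set w : G.Walk x x := Walk.cons hxy (Walk.cons hyz (Walk.cons hzx Walk.nil)) with hwdef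
  have hwe : w.edges = [s(x, y), s(y, z), s(z, x)] := by rw [hwdef]; simp
  have hcyc : w.IsCycle := by
    rw [Walk.isCycle_def]
    refine ⟨⟨?_⟩, by simp [hwdef], ?_⟩
    · rw [hwe, ← hexy, ← hfyz, ← hhzx]
      simp only [List.nodup_cons, List.mem_cons, List.not_mem_nil, or_false,
        List.mem_singleton, List.nodup_nil, and_true, not_or]
      exact ⟨⟨hef.ne, heh.ne⟩, hlt.ne, not_false⟩
    · rw [hwdef]
      simp only [Walk.support_cons, Walk.support_nil, List.tail_cons]
      simp only [List.nodup_cons, List.mem_cons, List.not_mem_nil, or_false,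
        List.mem_singleton, List.nodup_nil, and_true, not_or]
      exact ⟨⟨hyz.ne, fun hc => hxy.ne hc.symm⟩, hzx.ne, not_false⟩
  refine ⟨{g | g ∈ w.edges} \ {h}, ⟨x, w, hcyc, h, ?_, ?_, rfl⟩, ?_⟩
  · rw [hwe, ← hhzx]; simp
  · intro g hg
    rw [hwe, ← hexy, ← hfyz, ← hhzx, List.mem_cons, List.mem_cons,
      List.mem_singleton] at hg
    rcases hg with hg | hg | hg
    · exact hg ▸ heh.le
    · exact hg ▸ hlt.le
    · exact hg ▸ le_rfl
  · rintro g ⟨hg, hgh⟩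
    simp only [Set.mem_setOf_eq] at hg
    rw [hwe, ← hexy, ← hfyz, ← hhzx, List.mem_cons, List.mem_cons,
      List.mem_singleton] at hg
    rcases hg with hg | hg | hg
    · exact Or.inl hg
    · exact Or.inr hg
    · exact absurd hg hgh

lemma bc_delete_iff (he : s(a, b) ∈ G.edgeSet) (hmin : ∀ f ∈ G.edgeSet, s(a, b) ≤ f)
    {X : Finset (Sym2 V)} (hX : ↑X ⊆ (G.deleteEdges {s(a, b)}).edgeSet) :
    (∃ B, IsBrokenCircuit G B ∧ B ⊆ ↑X) ↔
      (∃ B, IsBrokenCircuit (G.deleteEdges {s(a, b)}) B ∧ B ⊆ ↑X) := by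
  constructor
  · rintro ⟨B, ⟨u, w, hw, fm, hfm, hmax, hBdef⟩, hBX⟩
    have hmem : s(a, b) ∉ w.edges := by
      intro hmem
      have hne : s(a, b) ≠ fm := Ne.symm (max_ne_min_edge he hmin hw hmax)
      have : s(a, b) ∈ B := by rw [hBdef]; exact ⟨hmem, hne⟩
      have := hX (hBX this)
      rw [edgeSet_deleteEdges, Set.mem_diff] at this
      exact this.2 rfl
    have hsub : ∀ g ∈ w.edges, g ∈ (G.deleteEdges {s(a, b)}).edgeSet := by
      intro g hg
      rw [edgeSet_deleteEdges, Set.mem_diff]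
      refine ⟨w.edges_subset_edgeSet hg, fun hc => hmem ?_⟩
      rw [Set.mem_singleton_iff] at hc
      rwa [← hc]
    refine ⟨B, ⟨u, w.transfer _ hsub, hw.transfer hsub, fm, ?_, ?_, ?_⟩, hBX⟩
    · rw [Walk.edges_transfer]; exact hfm
    · intro g hg; rw [Walk.edges_transfer] at hg; exact hmax g hg
    · rw [hBdef]; congr 1; ext g; rw [Set.mem_setOf_eq, Set.mem_setOf_eq, Walk.edges_transfer]
  · rintro ⟨B, ⟨u, w, hw, fm, hfm, hmax, hBdef⟩, hBX⟩
    have hsub : ∀ g ∈ w.edges, g ∈ G.edgeSet := by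
      intro g hg
      have := w.edges_subset_edgeSet hg
      rw [edgeSet_deleteEdges, Set.mem_diff] at this
      exact this.1
    refine ⟨B, ⟨u, w.transfer G hsub, hw.transfer hsub, fm, ?_, ?_, ?_⟩, hBX⟩
    · rw [Walk.edges_transfer]; exact hfm
    · intro g hg; rw [Walk.edges_transfer] at hg; exact hmax g hg
    · rw [hBdef]; congr 1; ext g; rw [Set.mem_setOf_eq, Set.mem_setOf_eq, Walk.edges_transfer]

end medium


/-- Deletion–contraction for the broken-circuit counts: if `e = s(a, b)` is the
minimum edge of a finite simple graph `G` (which has at least one edge) and `k ≥ 1`,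
then the number of `k`-subsets of `E(G)` including no broken circuit of `G` equals
the number of `k`-subsets of `E(G - e)` including no broken circuit of `G - e` plus
the number of `(k-1)`-subsets of `E(G|ₑ)` including no broken circuit of `G|ₑ`. -/
theorem deletion_contraction_count_broken_circuit {V : Type*} [Fintype V]
    [DecidableEq V] [LinearOrder (Sym2 V)] (G : SimpleGraph V) (a b : V)
    (e : Sym2 V) (hab : e = s(a, b)) (he : e ∈ G.edgeSet)
    (hmin : ∀ f ∈ G.edgeSet, e ≤ f) (k : ℕ) (hk : 1 ≤ k) :
    {X : Finset (Sym2 V) | ↑X ⊆ G.edgeSet ∧ X.card = k ∧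
        ¬ ∃ B, IsBrokenCircuit G B ∧ B ⊆ ↑X}.ncard =
      {X : Finset (Sym2 V) | ↑X ⊆ (G.deleteEdges {e}).edgeSet ∧ X.card = k ∧
        ¬ ∃ B, IsBrokenCircuit (G.deleteEdges {e}) B ∧ B ⊆ ↑X}.ncard +
      {Y : Finset (Sym2 V) | ↑Y ⊆ {f | IsContractEdge G e f} ∧ Y.card = k - 1 ∧
        ¬ ∃ B, IsContractBrokenCircuit G a b B ∧ B ⊆ ↑Y}.ncard := by
  classical
  subst hab
  set P : Set (Finset (Sym2 V)) := {X | ↑X ⊆ G.edgeSet ∧ X.card = k ∧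
    ¬ ∃ B, IsBrokenCircuit G B ∧ B ⊆ ↑X} with hP
  set D : Set (Finset (Sym2 V)) := {X | ↑X ⊆ (G.deleteEdges {s(a, b)}).edgeSet ∧ X.card = k ∧
    ¬ ∃ B, IsBrokenCircuit (G.deleteEdges {s(a, b)}) B ∧ B ⊆ ↑X} with hD
  set C : Set (Finset (Sym2 V)) := {Y | ↑Y ⊆ {f | IsContractEdge G s(a, b) f} ∧
    Y.card = k - 1 ∧ ¬ ∃ B, IsContractBrokenCircuit G a b B ∧ B ⊆ ↑Y} with hC
  set P0 : Set (Finset (Sym2 V)) := {X ∈ P | s(a, b) ∉ X} with hP0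
  set P1 : Set (Finset (Sym2 V)) := {X ∈ P | s(a, b) ∈ X} with hP1
  have hsplit : P = P0 ∪ P1 := by
    ext X
    rw [hP0, hP1, Set.mem_union, Set.mem_sep_iff, Set.mem_sep_iff]
    by_cases hmem : s(a, b) ∈ X <;> tauto
  have hdisj : Disjoint P0 P1 := by
    rw [Set.disjoint_left]
    rintro X ⟨-, h0⟩ ⟨-, h1⟩
    exact h0 h1
  have hcard : P.ncard = P0.ncard + P1.ncard := by
    rw [hsplit, Set.ncard_union_eq hdisj]
  have hP0D : P0 = D := by
    ext X
    rw [hP0, hD, Set.mem_sep_iff, hP, Set.mem_setOf_eq, Set.mem_setOf_eq]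
    constructor
    · rintro ⟨⟨hsub, hcardX, hnb⟩, hnot⟩
      have hsub' : ↑X ⊆ (G.deleteEdges {s(a, b)}).edgeSet := by
        intro g hg
        rw [edgeSet_deleteEdges, Set.mem_diff]
        refine ⟨hsub hg, fun hc => hnot ?_⟩
        rw [Set.mem_singleton_iff] at hc
        rw [← hc]
        exact hg
      exact ⟨hsub', hcardX, fun hex => hnb ((bc_delete_iff he hmin hsub').2 hex)⟩
    · rintro ⟨hsub, hcardX, hnb⟩
      have hsubG : ↑X ⊆ G.edgeSet := by
        intro g hg
        have := hsub hg
        rw [edgeSet_deleteEdges, Set.mem_diff] at this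
        exact this.1
      have hnot : s(a, b) ∉ X := by
        intro hc
        have := hsub hc
        rw [edgeSet_deleteEdges, Set.mem_diff] at this
        exact this.2 rfl
      exact ⟨⟨hsubG, hcardX, fun hex => hnb ((bc_delete_iff he hmin hsub).1 hex)⟩, hnot⟩
  have hinj : Set.InjOn (fun X : Finset (Sym2 V) => X.erase s(a, b)) P1 := by
    intro X1 h1 X2 h2 heq
    rw [← Finset.insert_erase h1.2, ← Finset.insert_erase h2.2]
    simp only at heq
    rw [heq]
  have hP1C : C = (fun X : Finset (Sym2 V) => X.erase s(a, b)) '' P1 := by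
    ext Y
    constructor
    · intro hYC
      obtain ⟨hYsub, hYcard, hYnb⟩ := hYC
      have heY : s(a, b) ∉ Y := fun hc => (hYsub hc).2.1 rfl
      refine ⟨insert s(a, b) Y, ⟨⟨?_, ?_, ?_⟩, Finset.mem_insert_self _ _⟩,
        Finset.erase_insert heY⟩
      · intro g hg
        rw [Finset.coe_insert, Set.mem_insert_iff] at hg
        rcases hg with rfl | hg
        · exact he
        · exact (hYsub hg).1
      · rw [Finset.card_insert_of_notMem heY, hYcard]; omega
      · rintro ⟨B, ⟨u, w, hw, fm, hfm, hmax, hBdef⟩, hBX⟩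
        have hBspec : ∀ g ∈ w.edges, g ≠ fm → g = s(a, b) ∨ g ∈ (↑Y : Set (Sym2 V)) := by
          intro g hg hne
          have hgB : g ∈ B := by rw [hBdef]; exact ⟨hg, hne⟩
          have := hBX hgB
          rw [Finset.coe_insert, Set.mem_insert_iff] at this
          rcases this with h' | h'
          · exact Or.inl h'
          · exact Or.inr h'
        obtain ⟨B', hB'c, hB'Y⟩ := project_cycle he hmin hw hfm hmax ↑Y
          (fun f hf => hYsub hf) hBspec
        exact hYnb ⟨B', hB'c, hB'Y⟩
    · rintro ⟨X, ⟨⟨hsub, hcardX, hnb⟩, hin⟩, rfl⟩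
      simp only
      refine ⟨?_, ?_, ?_⟩
      · intro f hf
        rw [Finset.coe_erase, Set.mem_diff, Finset.mem_coe, Set.mem_singleton_iff] at hf
        obtain ⟨hfX, hfne⟩ := hf
        refine ⟨hsub hfX, hfne, ?_⟩
        intro h hlt ht
        obtain ⟨B, hBc, hBsub⟩ := bc_of_triangle hmin hlt hfne ht
        refine hnb ⟨B, hBc, subset_trans hBsub ?_⟩
        rintro g hg
        rcases Set.mem_insert_iff.1 hg with rfl | hg'
        · exact hin
        · rw [Set.mem_singleton_iff] at hg'
          exact hg' ▸ hfX
      · rw [Finset.card_erase_of_mem hin, hcardX]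
      · rintro ⟨B, ⟨u, wc, hwc, S, hS, fm, hfmS, hfmmax, hBdef⟩, hBY⟩
        obtain ⟨u', c, hcyc, hedge⟩ := lift_cycle he wc hwc S hS
        obtain ⟨m, hm, hmx⟩ := list_exists_max (cycle_edges_nonempty hcyc)
        apply hnb
        refine ⟨{g | g ∈ c.edges} \ {m}, ⟨u', c, hcyc, m, hm, hmx, rfl⟩, ?_⟩
        rintro g ⟨hg, hgm⟩
        have hSsubE : ∀ f ∈ S, f ∈ G.edgeSet := fun f hf => ((hS f).1 hf).1.1
        rcases hedge g hg with hgS | hgE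
        · by_cases hgfm : g = fm
          · exfalso
            apply hgm
            have h1 : g ≤ m := hmx g hg
            have h2 : m ≤ g := by
              rcases hedge m hm with hmS | hmE
              · exact (hfmmax m hmS).trans (le_of_eq hgfm.symm)
              · rw [hmE]; exact hmin g (hSsubE g hgS)
            exact Set.mem_singleton_iff.2 (le_antisymm h1 h2)
          · have hgB : g ∈ B := by rw [hBdef]; exact ⟨hgS, hgfm⟩
            have := hBY hgB
            rw [Finset.coe_erase, Set.mem_diff] at this
            exact this.1
        · rw [hgE]; exact hin
  rw [hcard, hP0D, hP1C, Set.ncard_image_of_injOn hinj]
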